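/- arXiv:1709.08033 — 2 statements merged into one kernel-verified Lean document; each statement's English description precedes it below -/
import Mathlib

section
/- Let G be a finite abelian group and H ≤ G a subgroup. Then D(G) ≤ exp(G/H)·(D(H) − 1) + η(G/H). -/
open Multiset Finset Filter

/-- The Davenport constant: smallest `t ≥ 1` such that every multiset of `t` or more
elements of `G` has a non-empty zero-sum sub-multiset. -/
noncomputable def DavCon (G : Type*) [AddCommGroup G] : ℕ :=
  sInf {t : ℕ | 1 ≤ t ∧ ∀ S : Multiset G, t ≤ Multiset.card S →
    ∃ T, T ≤ S ∧ T ≠ 0 ∧ T.sum = 0}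

/-- The η-invariant: smallest `t ≥ 1` such that every multiset of `t` or more elements of `G`
has a non-empty zero-sum sub-multiset of length at most `exp G`. -/
noncomputable def EtaCon (G : Type*) [AddCommGroup G] : ℕ :=
  sInf {t : ℕ | 1 ≤ t ∧ ∀ S : Multiset G, t ≤ Multiset.card S →
    ∃ T, T ≤ S ∧ T ≠ 0 ∧ Multiset.card T ≤ AddMonoid.exponent G ∧ T.sum = 0}

/-- `maxPP n` is the greatest prime power dividing `n`, with `maxPP 1 = 1`. -/
def maxPP (n : ℕ) : ℕ := ((n.divisors).filter IsPrimePow).max.unbotD 1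

/-!
Split a sequence `S` over `G` of length `exp(G/H) (D(H) - 1) + η(G/H)` greedily into `D(H)`
disjoint non-empty blocks whose sums lie in `H`: as long as at least `η(G/H)` terms remain, the
definition of `η(G/H)` applied to their images in `G/H` yields a further block of length at most
`exp(G/H)`. The `D(H)` block sums form a sequence over `H`, so some non-empty subfamily of blocks
has total sum zero, and its union is a non-empty zero-sum subsequence of `S`.
-/

namespace Multiset

variable {α β : Type*}

theorem exists_le_map_eq_of_le_map {f : α → β} {S : Multiset α} {T' : Multiset β}
    (h : T' ≤ S.map f) : ∃ T ≤ S, T.map f = T' := by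
  induction S using Quotient.inductionOn
  induction T' using Quotient.inductionOn
  obtain ⟨w, hw, hwS⟩ := Multiset.coe_le.mp h
  obtain ⟨l, hl, rfl⟩ := List.sublist_map_iff.mp hwS
  exact ⟨l, Multiset.coe_le.mpr hl.subperm, Quotient.sound hw⟩

theorem join_le_join {B B' : Multiset (Multiset α)} (h : B' ≤ B) : B'.join ≤ B.join := by
  obtain ⟨C, rfl⟩ := le_iff_exists_add.mp h
  rw [join_add]
  exact le_add_right _ _

theorem exists_lt_count_of_mul_lt_card [Fintype α] [DecidableEq α] {S : Multiset α} {n : ℕ}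
    (h : Fintype.card α * n < card S) : ∃ a, n < S.count a := by
  by_contra! hS
  have : card S ≤ Fintype.card α * n :=
    calc card S = ∑ a, S.count a := (Multiset.sum_count_eq_card fun a _ => Finset.mem_univ a).symm
      _ ≤ ∑ _a : α, n := Finset.sum_le_sum fun a _ => hS a
      _ = Fintype.card α * n := by simp
  omega

theorem exists_join_le_of_forall_exists_short {P : Multiset α → Prop} {e η : ℕ}
    (hη : ∀ S : Multiset α, η ≤ card S → ∃ T ≤ S, card T ≤ e ∧ P T) (k : ℕ) (S : Multiset α)
    (hS : e * k + η ≤ card S) :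
    ∃ B : Multiset (Multiset α), card B = k + 1 ∧ B.join ≤ S ∧ ∀ T ∈ B, P T := by
  classical
  induction k generalizing S with
  | zero =>
    obtain ⟨T, hTS, -, hT⟩ := hη S (by simpa using hS)
    exact ⟨{T}, rfl, by simpa using hTS, by simpa using hT⟩
  | succ k ih =>
    obtain ⟨T, hTS, hTe, hT⟩ := hη S (by rw [Nat.mul_succ] at hS; omega)
    obtain ⟨B, hB, hBS, hBP⟩ := ih (S - T) (by rw [card_sub hTS, Nat.mul_succ] at *; omega)
    refine ⟨T ::ₘ B, by simp [hB], ?_, by simpa [hT] using hBP⟩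
    calc (T ::ₘ B).join = T + B.join := join_cons T B
      _ ≤ T + (S - T) := add_le_add_right hBS T
      _ = S := add_tsub_cancel_of_le hTS

end Multiset

section ZeroSum

variable {G : Type*} [AddCommGroup G]

theorem exists_zero_sum_of_card_mul_lt {K : Type*} [AddCommGroup K] [Fintype K] {S : Multiset K}
    (h : Fintype.card K * (AddMonoid.exponent K - 1) < card S) :
    ∃ T ≤ S, T ≠ 0 ∧ card T ≤ AddMonoid.exponent K ∧ T.sum = 0 := by
  classical
  obtain ⟨g, hg⟩ := Multiset.exists_lt_count_of_mul_lt_card h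
  have hexp : 0 < AddMonoid.exponent K := AddMonoid.exponent_pos.mpr .of_finite
  refine ⟨replicate (AddMonoid.exponent K) g, le_count_iff_replicate_le.mp (by omega),
    card_pos.mp (by simpa using hexp), by simp, by simp [AddMonoid.exponent_nsmul_eq_zero]⟩

theorem etaCon_spec (K : Type*) [AddCommGroup K] [Finite K] :
    1 ≤ EtaCon K ∧ ∀ S : Multiset K, EtaCon K ≤ card S →
      ∃ T ≤ S, T ≠ 0 ∧ card T ≤ AddMonoid.exponent K ∧ T.sum = 0 := by
  have := Fintype.ofFinite K
  have hne : {t : ℕ | 1 ≤ t ∧ ∀ S : Multiset K, t ≤ card S →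
      ∃ T ≤ S, T ≠ 0 ∧ card T ≤ AddMonoid.exponent K ∧ T.sum = 0}.Nonempty :=
    ⟨Fintype.card K * (AddMonoid.exponent K - 1) + 1, Nat.le_add_left 1 _,
      fun S hS => exists_zero_sum_of_card_mul_lt hS⟩
  exact Nat.sInf_mem hne

theorem davCon_spec (K : Type*) [AddCommGroup K] [Finite K] :
    1 ≤ DavCon K ∧ ∀ S : Multiset K, DavCon K ≤ card S → ∃ T ≤ S, T ≠ 0 ∧ T.sum = 0 := by
  have hne : {t : ℕ | 1 ≤ t ∧ ∀ S : Multiset K, t ≤ card S →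
      ∃ T ≤ S, T ≠ 0 ∧ T.sum = 0}.Nonempty := by
    refine ⟨EtaCon K, (etaCon_spec K).1, fun S hS => ?_⟩
    obtain ⟨T, hTS, hT0, -, hT⟩ := (etaCon_spec K).2 S hS
    exact ⟨T, hTS, hT0, hT⟩
  exact Nat.sInf_mem hne

theorem exists_sum_mem_of_etaCon_quotient_le (H : AddSubgroup G) [Finite (G ⧸ H)]
    (S : Multiset G) (hS : EtaCon (G ⧸ H) ≤ card S) :
    ∃ T ≤ S, card T ≤ AddMonoid.exponent (G ⧸ H) ∧ T ≠ 0 ∧ T.sum ∈ H := by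
  obtain ⟨T', hT'S, hT'0, hT'e, hT'⟩ :=
    (etaCon_spec (G ⧸ H)).2 (S.map (QuotientAddGroup.mk' H)) (by simpa using hS)
  obtain ⟨T, hTS, rfl⟩ := Multiset.exists_le_map_eq_of_le_map hT'S
  refine ⟨T, hTS, by simpa using hT'e, by simpa using hT'0, ?_⟩
  rwa [← map_multiset_sum, QuotientAddGroup.mk'_apply, QuotientAddGroup.eq_zero_iff] at hT'

theorem exists_zero_sum_of_davCon_le (H : AddSubgroup G) [Finite H] {S : Multiset G}
    (hSH : ∀ x ∈ S, x ∈ H) (hS : DavCon H ≤ card S) : ∃ T ≤ S, T ≠ 0 ∧ T.sum = 0 := by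
  lift S to Multiset H using hSH
  obtain ⟨T, hTS, hT0, hT⟩ := (davCon_spec H).2 S (by simpa using hS)
  refine ⟨T.map Subtype.val, map_le_map hTS, by simpa using hT0, ?_⟩
  rw [← AddSubgroup.val_multiset_sum, hT, ZeroMemClass.coe_zero]

theorem exists_zero_sum_le_join {B : Multiset (Multiset G)} (hB : ∀ T ∈ B, T ≠ 0)
    {N : Multiset G} (hNB : N ≤ B.map Multiset.sum) (hN0 : N ≠ 0) (hN : N.sum = 0) :
    ∃ T ≤ B.join, T ≠ 0 ∧ T.sum = 0 := by
  obtain ⟨B', hB'B, rfl⟩ := Multiset.exists_le_map_eq_of_le_map hNB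
  obtain ⟨X, hX⟩ := exists_mem_of_ne_zero (by simpa using hN0 : B' ≠ 0)
  refine ⟨B'.join, Multiset.join_le_join hB'B, ?_, by rwa [sum_join]⟩
  exact ne_bot_of_le_ne_bot (hB X (mem_of_le hB'B hX)) (le_sum_of_mem hX)

end ZeroSum

/-- the inductive method bound. -/
theorem stmt_6 (G : Type*) [AddCommGroup G] [Fintype G] (H : AddSubgroup G) :
    DavCon G ≤ AddMonoid.exponent (G ⧸ H) * (DavCon H - 1) + EtaCon (G ⧸ H) := by
  have hη := (etaCon_spec (G ⧸ H)).1
  have hD := (davCon_spec H).1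
  refine Nat.sInf_le ⟨by omega, fun S hS => ?_⟩
  obtain ⟨B, hBcard, hBS, hB⟩ := Multiset.exists_join_le_of_forall_exists_short
    (exists_sum_mem_of_etaCon_quotient_le H) (DavCon H - 1) S hS
  obtain ⟨N, hNB, hN0, hN⟩ := exists_zero_sum_of_davCon_le H (S := B.map Multiset.sum)
    (by simpa using fun T hT => (hB T hT).2) (by simp only [Multiset.card_map, hBcard]; omega)
  obtain ⟨T, hTB, hT0, hT⟩ := exists_zero_sum_le_join (fun T hT => (hB T hT).1) hNB hN0 hN
  exact ⟨T, hTB.trans hBS, hT0, hT⟩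
end

section
/- For every prime p and integers α, r ≥ 1, n_1 ∣ ⋯ ∣ n_r powers of p with n_i > 1: D(C_{n_1} ⊕ ⋯ ⊕ C_{n_r}) = ∑_{i=1}^r (n_i − 1) + 1 (Olson's theorem for p-groups), and in particular D(C_{p^α}^r) = r(p^α − 1) + 1. -/
/-!
Write `G = ∏ ZMod (p ^ kᵢ)` with basis `eᵢ` and `d = ∑ (p ^ kᵢ - 1)`. The sequence with
`p ^ kᵢ - 1` copies of each `eᵢ` is zero-sum free, so `D(G) ≥ d + 1`.

Conversely (Olson), in `𝔽_p[G]` the elements `yᵢ = [eᵢ] - 1` satisfy `yᵢ ^ p ^ kᵢ = 0` by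
the Frobenius, so the ideal `J` they span has `J ^ (d + 1) = 0`; and `J` contains every
`[g] - 1`, since the `eᵢ` generate `G`. For a sequence `M` of length `> d` the product
`∏_{g ∈ M} (1 - [g])` therefore vanishes, whereas its coefficient at `0` is `1` if `M` is
zero-sum free, because every monomial in its expansion is `±[∑ T]` for a subsequence `T ≤ M`.
-/

open Multiset Finset Filter

namespace Multiset

theorem exists_le_map_eq_of_le_map_s9 {α β : Type*} {f : α → β} {s : Multiset α}
    {t : Multiset β} (h : t ≤ s.map f) : ∃ u ≤ s, u.map f = t := by
  induction s using Quotient.inductionOn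
  induction t using Quotient.inductionOn
  obtain ⟨l, hperm, hsub⟩ := h
  obtain ⟨l', hl', rfl⟩ := List.sublist_map_iff.1 hsub
  exact ⟨l', hl'.subperm, Quot.sound hperm⟩

end Multiset

namespace Ideal

variable {R : Type*} [CommSemiring R]

theorem sup_pow_add_add_one_eq_bot {I J : Ideal R} {a b : ℕ} (hI : I ^ (a + 1) = ⊥)
    (hJ : J ^ (b + 1) = ⊥) : (I ⊔ J) ^ (a + b + 1) = ⊥ := by
  rw [eq_bot_iff, ← add_eq_sup, add_pow, sum_eq_sup]
  refine Finset.sup_le fun i _ => ?_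
  rcases le_or_gt (a + 1) i with h | h
  · exact mul_le_left.trans (mul_le_left.trans ((pow_le_pow_right h).trans hI.le))
  · refine mul_le_left.trans (mul_le_right.trans ((pow_le_pow_right ?_).trans hJ.le))
    omega

theorem span_range_pow_eq_bot {ι : Type*} [Fintype ι] (y : ι → R) (m : ι → ℕ)
    (hy : ∀ i, y i ^ (m i + 1) = 0) : span (Set.range y) ^ (∑ i, m i + 1) = ⊥ := by
  classical
  suffices ∀ s : Finset ι, span (y '' s) ^ (∑ i ∈ s, m i + 1) = ⊥ by
    simpa [Set.image_univ] using this Finset.univ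
  intro s
  induction s using Finset.induction_on with
  | empty => simp
  | insert a s ha ih =>
    rw [Finset.coe_insert, Set.image_insert_eq, span_insert, Finset.sum_insert ha]
    refine sup_pow_add_add_one_eq_bot ?_ ih
    rw [span_singleton_pow, hy, span_singleton_eq_bot]

theorem multiset_prod_mem_pow {I : Ideal R} {M : Multiset R}
    (h : ∀ x ∈ M, x ∈ I) : M.prod ∈ I ^ Multiset.card M := by
  induction M using Multiset.induction with
  | empty => simp
  | cons a M ih =>
    rw [Multiset.prod_cons, Multiset.card_cons, pow_succ']
    exact mul_mem_mul (h a (Multiset.mem_cons_self a M))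
      (ih fun x hx => h x (Multiset.mem_cons_of_mem hx))

end Ideal

def ZeroSumFree {G : Type*} [AddCommMonoid G] (S : Multiset G) : Prop :=
  ∀ T ≤ S, T ≠ 0 → T.sum ≠ 0

namespace AddMonoidAlgebra

variable {k G : Type*} [CommRing k] [AddCommGroup G]

noncomputable def olsonProd (M : Multiset G) : AddMonoidAlgebra k G :=
  (M.map fun g => 1 - single g 1).prod

@[simp]
lemma olsonProd_zero : olsonProd (0 : Multiset G) = (1 : AddMonoidAlgebra k G) := by
  simp [olsonProd]

lemma coeff_olsonProd_cons (g : G) (M : Multiset G) (x : G) :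
    (olsonProd (k := k) (g ::ₘ M)).coeff x
      = (olsonProd (k := k) M).coeff x - (olsonProd (k := k) M).coeff (-g + x) := by
  have h : olsonProd (k := k) (g ::ₘ M) = olsonProd M - single g 1 * olsonProd M := by
    simp only [olsonProd, Multiset.map_cons, Multiset.prod_cons]
    ring
  rw [h, coeff_sub, Finsupp.sub_apply, coeff_single_mul_apply, one_mul]

lemma exists_le_sum_eq_of_coeff_olsonProd_ne_zero {M : Multiset G} {x : G}
    (hx : (olsonProd (k := k) M).coeff x ≠ 0) : ∃ T ≤ M, T.sum = x := by
  classical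
  induction M using Multiset.induction generalizing x with
  | empty =>
    simp only [olsonProd_zero, one_def, coeff_single, Finsupp.single_apply, ne_eq,
      ite_eq_right_iff, Classical.not_imp] at hx
    exact ⟨0, le_rfl, by simpa using hx.1⟩
  | cons g M ih =>
    rw [coeff_olsonProd_cons] at hx
    by_cases hM : (olsonProd (k := k) M).coeff x = 0
    · obtain ⟨T, hT, hs⟩ := ih (x := -g + x) (by simp_all)
      refine ⟨g ::ₘ T, Multiset.cons_le_cons g hT, ?_⟩
      rw [Multiset.sum_cons, hs, add_neg_cancel_left]
    · obtain ⟨T, hT, hs⟩ := ih hM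
      exact ⟨T, hT.trans (Multiset.le_cons_self _ _), hs⟩

lemma coeff_olsonProd_zero_of_zeroSumFree {M : Multiset G} (hM : ZeroSumFree M) :
    (olsonProd (k := k) M).coeff 0 = 1 := by
  classical
  induction M using Multiset.induction with
  | empty => simp [one_def, coeff_single]
  | cons g M ih =>
    have hg : (olsonProd (k := k) M).coeff (-g) = 0 := by
      by_contra hne
      obtain ⟨T, hT, hs⟩ := exists_le_sum_eq_of_coeff_olsonProd_ne_zero hne
      exact hM (g ::ₘ T) (Multiset.cons_le_cons g hT) Multiset.cons_ne_zero (by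
        rw [Multiset.sum_cons, hs, add_neg_cancel])
    rw [coeff_olsonProd_cons, add_zero, hg, sub_zero,
      ih fun T hT => hM T (hT.trans (Multiset.le_cons_self _ _))]

theorem single_sub_one_mem_span_of_closure_eq_top {ι : Type*} {e : ι → G}
    (he : AddSubmonoid.closure (Set.range e) = ⊤) (g : G) :
    single g (1 : k) - 1 ∈ Ideal.span (Set.range fun i => single (e i) (1 : k) - 1) := by
  set J := Ideal.span (Set.range fun i => single (e i) (1 : k) - 1)
  have hg : g ∈ AddSubmonoid.closure (Set.range e) := he ▸ AddSubmonoid.mem_top g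
  induction hg using AddSubmonoid.closure_induction with
  | mem x hx =>
    obtain ⟨i, rfl⟩ := hx
    exact Ideal.subset_span ⟨i, rfl⟩
  | zero => simp [← one_def]
  | add x y _ _ hx hy =>
    have h : single (x + y) (1 : k) - 1 = (single x 1 - 1) * single y 1 + (single y 1 - 1) := by
      rw [show single (x + y) (1 : k) = single x 1 * single y 1 by rw [single_mul_single, mul_one]]
      ring
    rw [h]
    exact J.add_mem (J.mul_mem_right _ hx) hy

end AddMonoidAlgebra

open AddMonoidAlgebra in
theorem not_zeroSumFree_of_closure_eq_top {G ι : Type*} [AddCommGroup G] [Fintype ι] {p : ℕ}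
    [Fact p.Prime] {e : ι → G} (he : AddSubmonoid.closure (Set.range e) = ⊤) (m : ι → ℕ)
    (hm : ∀ i, p ^ m i • e i = 0) {M : Multiset G}
    (hM : ∑ i, (p ^ m i - 1) < Multiset.card M) :
    ¬ ZeroSumFree M := by
  have : CharP (AddMonoidAlgebra (ZMod p) G) p := charP_of_injective_algebraMap' (ZMod p) p
  set J := Ideal.span (Set.range fun i => single (e i) (1 : ZMod p) - 1)
  have hJ : J ^ (∑ i, (p ^ m i - 1) + 1) = ⊥ := by
    refine Ideal.span_range_pow_eq_bot _ _ fun i => ?_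
    rw [Nat.sub_add_cancel (Nat.one_le_pow _ _ (Fact.out : p.Prime).pos), sub_pow_char_pow,
      one_pow, single_pow, one_pow, hm i, ← one_def, sub_self]
  have hprod : olsonProd (k := ZMod p) M = 0 := by
    have hmem : olsonProd (k := ZMod p) M ∈ J ^ Multiset.card M := by
      rw [← Multiset.card_map (fun g => 1 - single g (1 : ZMod p))]
      refine Ideal.multiset_prod_mem_pow fun x hx => ?_
      obtain ⟨g, -, rfl⟩ := Multiset.mem_map.1 hx
      rw [← neg_sub]
      exact J.neg_mem (single_sub_one_mem_span_of_closure_eq_top he g)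
    simpa [hJ] using Ideal.pow_le_pow_right hM hmem
  intro hfree
  simpa [hprod] using coeff_olsonProd_zero_of_zeroSumFree (k := ZMod p) hfree

section PiZMod

variable {ι : Type*} {n : ι → ℕ}

theorem sum_map_single_one_apply [DecidableEq ι] (I : Multiset ι) (j : ι) :
    (I.map fun i => (Pi.single i 1 : (i : ι) → ZMod (n i))).sum j = I.count j := by
  induction I using Multiset.induction with
  | empty => simp
  | cons i I ih =>
    rcases eq_or_ne i j with rfl | hij
    · simp [ih, add_comm]
    · simp [ih, hij.symm]

theorem zeroSumFree_map_single_one [DecidableEq ι] {I : Multiset ι}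
    (hI : ∀ i, I.count i < n i) :
    ZeroSumFree (I.map fun i => (Pi.single i 1 : (i : ι) → ZMod (n i))) := by
  intro T hT hT0 hsum
  obtain ⟨J, hJI, rfl⟩ := Multiset.exists_le_map_eq_of_le_map_s9 hT
  obtain ⟨j, hj⟩ := Multiset.exists_mem_of_ne_zero (by simpa using hT0)
  have hdvd : n j ∣ J.count j := by
    rw [← ZMod.natCast_eq_zero_iff, ← sum_map_single_one_apply, hsum, Pi.zero_apply]
  have := Nat.le_of_dvd (Multiset.count_pos.2 hj) hdvd
  have := Multiset.count_le_of_le j hJI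
  have := hI j
  omega

theorem closure_range_single_one [∀ i, NeZero (n i)] [Fintype ι] [DecidableEq ι] :
    AddSubmonoid.closure (Set.range fun i => (Pi.single i 1 : (i : ι) → ZMod (n i))) = ⊤ := by
  refine eq_top_iff.2 fun g _ => ?_
  rw [← Finset.univ_sum_single g]
  refine AddSubmonoid.sum_mem _ fun i _ => ?_
  have : Pi.single i (g i) = (g i).val • (Pi.single i 1 : (i : ι) → ZMod (n i)) := by
    rw [← Pi.single_smul, nsmul_one, ZMod.natCast_zmod_val]
  rw [this]
  exact AddSubmonoid.nsmul_mem _ (AddSubmonoid.subset_closure (Set.mem_range_self i)) _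

end PiZMod

theorem davCon_eq_of_zeroSumFree {G : Type*} [AddCommGroup G] {d : ℕ}
    (hup : ∀ S : Multiset G, d < Multiset.card S → ¬ ZeroSumFree S) {S₀ : Multiset G}
    (hS₀ : ZeroSumFree S₀) (hcard : Multiset.card S₀ = d) : DavCon G = d + 1 := by
  have hmem : d + 1 ∈ {t : ℕ | 1 ≤ t ∧ ∀ S : Multiset G, t ≤ Multiset.card S →
      ∃ T, T ≤ S ∧ T ≠ 0 ∧ T.sum = 0} := by
    refine ⟨d.succ_pos, fun S hS => ?_⟩
    simpa [ZeroSumFree] using hup S hS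
  refine le_antisymm (Nat.sInf_le hmem) (le_csInf ⟨d + 1, hmem⟩ fun t ht => ?_)
  by_contra! hlt
  obtain ⟨T, hT, hT0, hsum⟩ := ht.2 S₀ (by omega)
  exact hS₀ T hT hT0 hsum

theorem davCon_pi_zmod_prime_pow {ι : Type*} [Fintype ι] (p : ℕ) [Fact p.Prime]
    (k : ι → ℕ) :
    DavCon ((i : ι) → ZMod (p ^ k i)) = ∑ i, (p ^ k i - 1) + 1 := by
  classical
  have hp : 0 < p := (Fact.out : p.Prime).pos
  refine davCon_eq_of_zeroSumFree (fun S hS => not_zeroSumFree_of_closure_eq_top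
    closure_range_single_one k (fun i => ?_) hS)
    (zeroSumFree_map_single_one (I := ∑ i, Multiset.replicate (p ^ k i - 1) i) fun i => ?_) ?_
  · rw [← Pi.single_smul, nsmul_one, ZMod.natCast_self, Pi.single_zero]
  · simpa [Multiset.count_sum', Multiset.count_replicate] using pow_pos hp (k i)
  · simp [Multiset.card_sum]

theorem stmt_9_general (p : ℕ) (hp : p.Prime) (α r : ℕ)
    (n : Fin r → ℕ) (hn : ∀ i, ∃ k : ℕ, 1 ≤ k ∧ n i = p ^ k) :
    DavCon ((i : Fin r) → ZMod (n i)) = (∑ i, (n i - 1)) + 1 ∧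
    DavCon (Fin r → ZMod (p ^ α)) = r * (p ^ α - 1) + 1 := by
  have : Fact p.Prime := ⟨hp⟩
  choose k hk using fun i => (hn i).imp fun _ => And.right
  obtain rfl : n = fun i => p ^ k i := funext hk
  refine ⟨davCon_pi_zmod_prime_pow p k, ?_⟩
  simpa using davCon_pi_zmod_prime_pow (ι := Fin r) p fun _ => α

/-- Olson's theorem for `p`-groups, and the special case `C_{p^α}^r`. -/
theorem stmt_9 (p : ℕ) (hp : p.Prime) (α r : ℕ) (hα : 1 ≤ α) (hr : 1 ≤ r)
    (n : Fin r → ℕ) (hn : ∀ i, ∃ k : ℕ, 1 ≤ k ∧ n i = p ^ k)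
    (hchain : ∀ i j : Fin r, i ≤ j → n i ∣ n j) :
    DavCon ((i : Fin r) → ZMod (n i)) = (∑ i, (n i - 1)) + 1 ∧
    DavCon (Fin r → ZMod (p ^ α)) = r * (p ^ α - 1) + 1 :=
  stmt_9_general p hp α r n hn
end
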